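/- Let 0 < b < 1, ℓ ≥ 2, γ > 0, and let m : [0,∞) → (0,∞) be a differentiable function with m(0) = 1 satisfying m(t) ≥ exp(ℓ(1−b)t) for all t ≥ 0 and the differential inequality (d/dt) ln m(t) ≤ ℓ(1−b) + γ e^{(1−b)(ℓ−1)t}/m(t) for all t ≥ 0. Then m(t) ≤ e^{γ/(1−b)} exp(ℓ(1−b)t) for all t ≥ 0. -/

import Mathlib

/-! Since `m t ≥ exp (ℓ (1 - b) t)`, the forcing term `γ e^{(1-b)(ℓ-1)t} / m t` is at most
`γ e^{-(1-b)t}`, so `(log m)' ≤ ℓ (1 - b) + γ e^{-(1-b)t}`. Integrating from `0`, where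
`log m = 0`, gives `log m t ≤ ℓ (1 - b) t + γ / (1 - b)`, since the decaying forcing term has total
mass `γ / (1 - b)` on `[0, ∞)`. -/

open Real

theorem hasDerivAt_one_sub_exp_neg_mul {c : ℝ} (hc : c ≠ 0) (t : ℝ) :
    HasDerivAt (fun s => (1 - exp (-(c * s))) / c) (exp (-(c * t))) t := by
  refine ((((hasDerivAt_id' t).const_mul c).fun_neg.exp).const_sub 1).div_const c
    |>.congr_deriv ?_
  field_simp

theorem le_add_mul_add_of_deriv_le_add_exp {f : ℝ → ℝ} {a γ c : ℝ} (hc : c ≠ 0)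
    (hf : ∀ t ≥ 0, DifferentiableAt ℝ f t)
    (hf' : ∀ t ≥ 0, deriv f t ≤ a + γ * exp (-(c * t))) {t : ℝ} (ht : 0 ≤ t) :
    f t ≤ f 0 + a * t + γ * ((1 - exp (-(c * t))) / c) := by
  have hB (s : ℝ) : HasDerivAt (fun s => f 0 + a * s + γ * ((1 - exp (-(c * s))) / c))
      (a + γ * exp (-(c * s))) s := by
    simpa using (((hasDerivAt_id' s).const_mul a).const_add (f 0)).fun_add
      ((hasDerivAt_one_sub_exp_neg_mul hc s).const_mul γ)
  refine image_le_of_deriv_right_le_deriv_boundary (f' := deriv f)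
    (fun s hs => (hf s hs.1).continuousAt.continuousWithinAt) (fun s hs => ?_) (by simp)
    (fun s _ => (hB s).continuousAt.continuousWithinAt)
    (fun s _ => (hB s).hasDerivWithinAt) (fun s hs => hf' s hs.1) ⟨ht, le_rfl⟩
  exact (hf s hs.1).hasDerivAt.hasDerivWithinAt

theorem mul_exp_div_le_mul_exp_neg {γ c ℓ t M : ℝ} (hγ : 0 ≤ γ)
    (hM : exp (ℓ * c * t) ≤ M) :
    γ * exp (c * (ℓ - 1) * t) / M ≤ γ * exp (-(c * t)) := by
  have hMpos : 0 < M := (exp_pos _).trans_le hM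
  rw [div_le_iff₀ hMpos]
  calc γ * exp (c * (ℓ - 1) * t) = γ * exp (-(c * t)) * exp (ℓ * c * t) := by
        rw [mul_assoc γ, ← exp_add]; congr 2; ring
    _ ≤ γ * exp (-(c * t)) * M := by gcongr

theorem stmt_7_general (b γ : ℝ) (hb1 : b < 1) (ℓ : ℕ)
    (hγ : 0 < γ) (m : ℝ → ℝ) (hdiff : Differentiable ℝ m) (hm0 : m 0 = 1)
    (hpos : ∀ t ≥ (0:ℝ), 0 < m t)
    (hlow : ∀ t ≥ (0:ℝ), Real.exp (ℓ * (1 - b) * t) ≤ m t)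
    (hineq : ∀ t ≥ (0:ℝ),
      deriv (fun s => Real.log (m s)) t ≤
        ℓ * (1 - b) + γ * Real.exp ((1 - b) * (ℓ - 1) * t) / m t) :
    ∀ t ≥ (0:ℝ), m t ≤ Real.exp (γ / (1 - b)) * Real.exp (ℓ * (1 - b) * t) := by
  intro t ht
  have hc : 0 < 1 - b := sub_pos.mpr hb1
  have hderiv (s : ℝ) (hs : 0 ≤ s) :
      deriv (fun s => log (m s)) s ≤ ℓ * (1 - b) + γ * exp (-((1 - b) * s)) := by
    have := mul_exp_div_le_mul_exp_neg hγ.le (hlow s hs)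
    linarith [hineq s hs]
  have hlog := le_add_mul_add_of_deriv_le_add_exp hc.ne'
    (fun s hs => (hdiff s).log (hpos s hs).ne') hderiv ht
  have hmass : γ * ((1 - exp (-((1 - b) * t))) / (1 - b)) ≤ γ / (1 - b) := by
    rw [mul_div_assoc']
    gcongr
    exact mul_le_of_le_one_right hγ.le (by linarith [exp_pos (-((1 - b) * t))])
  calc m t = exp (log (m t)) := (exp_log (hpos t ht)).symm
    _ ≤ exp (γ / (1 - b) + ℓ * (1 - b) * t) := by
        gcongr
        rw [hm0, log_one] at hlog
        linarith
    _ = exp (γ / (1 - b)) * exp (ℓ * (1 - b) * t) := exp_add _ _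

theorem stmt_7 (b γ : ℝ) (hb0 : 0 < b) (hb1 : b < 1) (ℓ : ℕ) (hℓ : 2 ≤ ℓ)
    (hγ : 0 < γ) (m : ℝ → ℝ) (hdiff : Differentiable ℝ m) (hm0 : m 0 = 1)
    (hpos : ∀ t ≥ (0:ℝ), 0 < m t)
    (hlow : ∀ t ≥ (0:ℝ), Real.exp (ℓ * (1 - b) * t) ≤ m t)
    (hineq : ∀ t ≥ (0:ℝ),
      deriv (fun s => Real.log (m s)) t ≤
        ℓ * (1 - b) + γ * Real.exp ((1 - b) * (ℓ - 1) * t) / m t) :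
    ∀ t ≥ (0:ℝ), m t ≤ Real.exp (γ / (1 - b)) * Real.exp (ℓ * (1 - b) * t) :=
  stmt_7_general b γ hb1 ℓ hγ m hdiff hm0 hpos hlow hineq
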